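/- arXiv:2107.06312 — 5 statements merged into one kernel-verified Lean document; each statement's English description precedes it below -/
import Mathlib

section
/- Let Γ = (A, Θ, p, c) be an anonymous nonatomic game with incomplete information and let (γ, T, π) be an information structure for Γ. Then every outcome induced by a Bayes Wardrop equilibrium (BWE) of Γ with information structure (γ, T, π) is a Bayes correlated Wardrop equilibrium (BCWE) of Γ. -/
/-!
Against the induced outcome each side of the BCWE inequality is a finite sum over type profiles
`τ` of `y_a(τ)` times a cost. Splitting `y_a(τ) = ∑ k, y^k_a(τ k)` and grouping the profiles by
the type `t` of population `k` writes each side as `∑ k, ∑ t, y^k_a(t)` times the interim cost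
that type `t` expects from `a` (resp. `b`). The BWE condition compares these interim costs
whenever `y^k_a(t) > 0`, and the other terms vanish.
-/

open MeasureTheory

/-- The set of flows: the simplex over the finite action set `A`. -/
def FlowSet (A : Type*) [Fintype A] : Set (A → ℝ) :=
  {y | (∀ a, 0 ≤ y a) ∧ ∑ a, y a = 1}

open Finset

lemma integral_sum_smul_dirac {X ι : Type*} [MeasurableSpace X] [MeasurableSingletonClass X]
    [Fintype ι] (w : ι → ℝ) (hw : ∀ i, 0 ≤ w i) (x : ι → X) (f : X → ℝ) :
    ∫ y, f y ∂(∑ i, ENNReal.ofReal (w i) • Measure.dirac (x i)) = ∑ i, w i * f (x i) := by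
  rw [integral_finsetSum_measure fun i _ =>
    ((integrable_const (f (x i))).congr (ae_eq_dirac f).symm).smul_measure ENNReal.ofReal_ne_top]
  simp [integral_smul_measure, ENNReal.toReal_ofReal (hw _)]

lemma sum_sum_apply_mul_eq_sum_sum_mul_sum_filter {K : Type*} [Fintype K] [DecidableEq K]
    {T : K → Type*} [∀ k, Fintype (T k)] [∀ k, DecidableEq (T k)]
    (f : ∀ k, T k → ℝ) (g : (∀ k, T k) → ℝ) :
    ∑ τ, (∑ k, f k (τ k)) * g τ =
      ∑ k, ∑ t : T k, f k t * ∑ τ ∈ univ.filter (fun τ : ∀ k, T k => τ k = t), g τ := by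
  simp_rw [sum_mul]
  rw [sum_comm]
  refine sum_congr rfl fun k _ => ?_
  rw [← sum_fiberwise univ (fun τ : ∀ k, T k => τ k)]
  refine sum_congr rfl fun t _ => ?_
  rw [mul_sum]
  exact sum_congr rfl fun τ hτ => by rw [(mem_filter.mp hτ).2]

theorem stmt0_general
    {A Θ K : Type*} [Fintype A] [Fintype Θ]
    [Fintype K] [DecidableEq K]
    -- the prior
    (p : Θ → ℝ)
    -- the (continuous) cost functions
    (c : A → (A → ℝ) → Θ → ℝ)
    -- the information structure: population sizes, type sets, signal distribution
    (T : K → Type*) [∀ k, Fintype (T k)] [∀ k, DecidableEq (T k)]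
    (π : Θ → (∀ k, T k) → ℝ)
    (hπ0 : ∀ θ τ, 0 ≤ π θ τ)
    -- a strategy profile
    (σ : ∀ k, T k → A → ℝ)
    (hσ0 : ∀ k t a, 0 ≤ σ k t a)
    -- its aggregate flows
    (agg : (∀ k, T k) → A → ℝ)
    (hagg : ∀ τ a, agg τ a = ∑ k, σ k (τ k) a)
    (haggF : ∀ τ, agg τ ∈ FlowSet A)
    -- the strategy profile is a Bayes Wardrop equilibrium
    (hBWE : ∀ (k : K) (t : T k) (a b : A), 0 < σ k t a →
      (∑ θ, ∑ τ ∈ Finset.univ.filter (fun τ : ∀ k, T k => τ k = t),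
        p θ * π θ τ * c a (agg τ) θ) ≤
      (∑ θ, ∑ τ ∈ Finset.univ.filter (fun τ : ∀ k, T k => τ k = t),
        p θ * π θ τ * c b (agg τ) θ))
    -- the induced outcome
    (μ : Θ → Measure ↥(FlowSet A))
    (hμ : ∀ θ, μ θ =
      ∑ τ, (ENNReal.ofReal (π θ τ)) •
        Measure.dirac (⟨agg τ, haggF τ⟩ : ↥(FlowSet A))) :
    -- conclusion: the induced outcome is a BCWE
    ∀ a b : A,
      ∑ θ, p θ * ∫ y : ↥(FlowSet A), (y : A → ℝ) a * c a (y : A → ℝ) θ ∂(μ θ) ≤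
      ∑ θ, p θ * ∫ y : ↥(FlowSet A), (y : A → ℝ) a * c b (y : A → ℝ) θ ∂(μ θ) := by
  intro a b
  have expected_cost_eq : ∀ d,
      ∑ θ, p θ * ∫ y : ↥(FlowSet A), (y : A → ℝ) a * c d (y : A → ℝ) θ ∂(μ θ) =
        ∑ k, ∑ t : T k, σ k t a * ∑ θ, ∑ τ ∈ univ.filter (fun τ : ∀ k, T k => τ k = t),
          p θ * π θ τ * c d (agg τ) θ := by
    intro d
    calc _ = ∑ θ, ∑ τ, (∑ k, σ k (τ k) a) * (p θ * π θ τ * c d (agg τ) θ) := by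
          refine sum_congr rfl fun θ _ => ?_
          rw [hμ θ, integral_sum_smul_dirac _ (hπ0 θ), mul_sum]
          exact sum_congr rfl fun τ _ => by rw [← hagg]; ring
      _ = ∑ θ, ∑ k, ∑ t : T k, σ k t a * ∑ τ ∈ univ.filter (fun τ : ∀ k, T k => τ k = t),
            p θ * π θ τ * c d (agg τ) θ :=
          sum_congr rfl fun θ _ =>
            sum_sum_apply_mul_eq_sum_sum_mul_sum_filter (fun k t => σ k t a) _
      _ = _ := by
          simp_rw [mul_sum]
          rw [sum_comm]
          exact sum_congr rfl fun k _ => sum_comm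
  rw [expected_cost_eq, expected_cost_eq]
  refine sum_le_sum fun k _ => sum_le_sum fun t _ => ?_
  rcases (hσ0 k t a).eq_or_lt with hzero | hpos
  · simp [← hzero]
  · exact mul_le_mul_of_nonneg_left (hBWE k t a b hpos) hpos.le

/-- For an anonymous nonatomic game with incomplete information
`Γ = (A, Θ, p, c)` and any information structure `(γ, T, π)`, the outcome induced by
any Bayes Wardrop equilibrium is a Bayes correlated Wardrop equilibrium of `Γ`. -/
theorem stmt0
    {A Θ K : Type*} [Fintype A] [Nonempty A] [Fintype Θ] [Nonempty Θ]
    [Fintype K] [Nonempty K] [DecidableEq K]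
    -- the prior
    (p : Θ → ℝ) (hp : ∀ θ, 0 < p θ) (hp1 : ∑ θ, p θ = 1)
    -- the (continuous) cost functions
    (c : A → (A → ℝ) → Θ → ℝ)
    (hc : ∀ a θ, ContinuousOn (fun y => c a y θ) (FlowSet A))
    -- the information structure: population sizes, type sets, signal distribution
    (γ : K → ℝ) (hγ0 : ∀ k, 0 ≤ γ k) (hγ1 : ∑ k, γ k = 1)
    (T : K → Type*) [∀ k, Fintype (T k)] [∀ k, Nonempty (T k)] [∀ k, DecidableEq (T k)]
    (π : Θ → (∀ k, T k) → ℝ)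
    (hπ0 : ∀ θ τ, 0 ≤ π θ τ) (hπ1 : ∀ θ, ∑ τ, π θ τ = 1)
    -- a strategy profile
    (σ : ∀ k, T k → A → ℝ)
    (hσ0 : ∀ k t a, 0 ≤ σ k t a) (hσ1 : ∀ k t, ∑ a, σ k t a = γ k)
    -- its aggregate flows
    (agg : (∀ k, T k) → A → ℝ)
    (hagg : ∀ τ a, agg τ a = ∑ k, σ k (τ k) a)
    (haggF : ∀ τ, agg τ ∈ FlowSet A)
    -- the strategy profile is a Bayes Wardrop equilibrium
    (hBWE : ∀ (k : K) (t : T k) (a b : A), 0 < σ k t a →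
      (∑ θ, ∑ τ ∈ Finset.univ.filter (fun τ : ∀ k, T k => τ k = t),
        p θ * π θ τ * c a (agg τ) θ) ≤
      (∑ θ, ∑ τ ∈ Finset.univ.filter (fun τ : ∀ k, T k => τ k = t),
        p θ * π θ τ * c b (agg τ) θ))
    -- the induced outcome
    (μ : Θ → Measure ↥(FlowSet A))
    (hμ : ∀ θ, μ θ =
      ∑ τ, (ENNReal.ofReal (π θ τ)) •
        Measure.dirac (⟨agg τ, haggF τ⟩ : ↥(FlowSet A))) :
    -- conclusion: the induced outcome is a BCWE
    ∀ a b : A,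
      ∑ θ, p θ * ∫ y : ↥(FlowSet A), (y : A → ℝ) a * c a (y : A → ℝ) θ ∂(μ θ) ≤
      ∑ θ, p θ * ∫ y : ↥(FlowSet A), (y : A → ℝ) a * c b (y : A → ℝ) θ ∂(μ θ) :=
  stmt0_general p c T π hπ0 σ hσ0 agg hagg haggF hBWE μ hμ
end

section
/- Let Γ = (A, c) be an anonymous nonatomic game admitting a potential Φ that is convex on 𝓕. Then a flow y ∈ 𝓕 is a Wardrop equilibrium of Γ if and only if y minimizes Φ over 𝓕, i.e., Φ(y) ≤ Φ(z) for all z ∈ 𝓕. -/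
open MeasureTheory

/-! A Wardrop equilibrium is exactly a solution of the variational inequality
`⟨c(y), z - y⟩ ≥ 0` on the simplex. Since `c(y)` is the gradient of the potential `Φ` at `y`,
convexity of `Φ` turns this first-order condition into global minimality on the simplex. -/

section FirstOrder

variable {E : Type*} [NormedAddCommGroup E] [NormedSpace ℝ E] {s : Set E} {f : E → ℝ}
  {f' : E →L[ℝ] ℝ} {x y : E}

/-- Restrict `f` to the line through `x` and `y` and compare the derivative at `x`
with the secant slope over `[0, 1]`. -/
theorem ConvexOn.add_fderiv_sub_le (hf : ConvexOn ℝ s f) (hx : x ∈ s) (hy : y ∈ s)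
    (hf' : HasFDerivAt f f' x) : f x + f' (y - x) ≤ f y := by
  have hline : HasDerivAt (f ∘ AffineMap.lineMap (k := ℝ) x y) (f' (y - x)) 0 := by
    refine HasFDerivAt.comp_hasDerivAt (0 : ℝ) ?_ (AffineMap.hasDerivAt_lineMap (𝕜 := ℝ))
    rwa [AffineMap.lineMap_apply_zero]
  have hslope := (hf.comp_affineMap (AffineMap.lineMap x y)).le_slope_of_hasDerivAt
    (x := 0) (y := 1) (by simpa) (by simpa) zero_lt_one hline
  simp only [slope, Function.comp_apply, AffineMap.lineMap_apply_one,
    AffineMap.lineMap_apply_zero, sub_zero, inv_one, one_smul, vsub_eq_sub] at hslope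
  linarith

theorem ConvexOn.isMinOn_iff_forall_fderiv_sub_nonneg (hf : ConvexOn ℝ s f) (hx : x ∈ s)
    (hf' : HasFDerivAt f f' x) : IsMinOn f s x ↔ ∀ y ∈ s, 0 ≤ f' (y - x) := by
  refine ⟨fun hmin y hy => ?_, fun h => isMinOn_iff.2 fun y hy => ?_⟩
  · exact hmin.localize.hasFDerivWithinAt_nonneg hf'.hasFDerivWithinAt
      (sub_mem_posTangentConeAt_of_segment_subset (hf.1.segment_subset hx hy))
  · linarith [hf.add_fderiv_sub_le hx hy hf', h y hy]

end FirstOrder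

theorem ContinuousLinearMap.apply_eq_sum_mul_single {A : Type*} [Fintype A] [DecidableEq A]
    (L : (A → ℝ) →L[ℝ] ℝ) (v : A → ℝ) : L v = ∑ a, v a * L (Pi.single a 1) := by
  conv_lhs => rw [← Finset.univ_sum_single v]
  simp only [map_sum]
  refine Finset.sum_congr rfl fun a _ => ?_
  rw [← smul_eq_mul, ← L.map_smul, ← Pi.single_smul', smul_eq_mul, mul_one]

theorem wardrop_iff_forall_sum_sub_mul_nonneg {A : Type*} [Fintype A] [DecidableEq A]
    {g y : A → ℝ} (hy : y ∈ FlowSet A) :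
    (∀ a b, y a * g a ≤ y a * g b) ↔ ∀ z ∈ FlowSet A, 0 ≤ ∑ a, (z a - y a) * g a := by
  constructor
  · intro hwe z hz
    have hmin : ∀ b, ∑ a, y a * g a ≤ g b := fun b => calc
      ∑ a, y a * g a ≤ ∑ a, y a * g b := Finset.sum_le_sum fun a _ => hwe a b
      _ = g b := by rw [← Finset.sum_mul, hy.2, one_mul]
    have hz_ge : ∑ a, y a * g a ≤ ∑ a, z a * g a := calc
      ∑ a, y a * g a = ∑ b, z b * ∑ a, y a * g a := by rw [← Finset.sum_mul, hz.2, one_mul]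
      _ ≤ ∑ a, z a * g a :=
        Finset.sum_le_sum fun b _ => mul_le_mul_of_nonneg_left (hmin b) (hz.1 b)
    simp only [sub_mul, Finset.sum_sub_distrib]
    linarith
  · intro hvar a b
    rcases eq_or_ne a b with rfl | hab
    · exact le_rfl
    -- move the mass of action `a` onto action `b`
    set z := y + Pi.single b (y a) - Pi.single a (y a)
    have hz : z ∈ FlowSet A := by
      refine ⟨fun x => ?_, ?_⟩
      · rcases eq_or_ne x a with rfl | hxa
        · simp [z, hab]
        · simp only [z, Pi.add_apply, Pi.sub_apply, Pi.single_apply, hxa, if_false]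
          split_ifs <;> linarith [hy.1 x, hy.1 a]
      · simp [z, Finset.sum_add_distrib, Finset.sum_sub_distrib, hy.2]
    have hgain : ∑ x, (z x - y x) * g x = y a * g b - y a * g a := by
      have hzy : ∀ x, z x - y x = (Pi.single b (y a) - Pi.single a (y a) : A → ℝ) x :=
        fun x => by simp only [z, Pi.add_apply, Pi.sub_apply]; ring
      simp [hzy, sub_mul, Pi.single_apply]
    linarith [hvar z hz]

theorem stmt2_general {A : Type*} [Fintype A] [DecidableEq A]
    (c : A → (A → ℝ) → ℝ)
    (Φ : (A → ℝ) → ℝ) (hdiff : Differentiable ℝ Φ)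
    (hpot : ∀ y ∈ FlowSet A, ∀ a : A, fderiv ℝ Φ y (Pi.single a 1) = c a y)
    (hconv : ConvexOn ℝ (FlowSet A) Φ)
    (y : A → ℝ) (hy : y ∈ FlowSet A) :
    (∀ a b : A, y a * c a y ≤ y a * c b y) ↔ (∀ z ∈ FlowSet A, Φ y ≤ Φ z) := by
  have hgrad : ∀ v, fderiv ℝ Φ y v = ∑ a, v a * c a y := fun v => by
    simp only [ContinuousLinearMap.apply_eq_sum_mul_single, hpot y hy]
  rw [wardrop_iff_forall_sum_sub_mul_nonneg hy, ← isMinOn_iff,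
    hconv.isMinOn_iff_forall_fderiv_sub_nonneg hy (hdiff y).hasFDerivAt]
  simp only [hgrad, Pi.sub_apply]

/-- In an anonymous nonatomic game `(A, c)` admitting a potential `Φ`
that is convex on the flow simplex, a flow `y` is a Wardrop equilibrium if and only
if it minimizes `Φ` over the flow simplex. -/
theorem stmt2 {A : Type*} [Fintype A] [Nonempty A] [DecidableEq A]
    (c : A → (A → ℝ) → ℝ) (hc : ∀ a, ContinuousOn (c a) (FlowSet A))
    (Φ : (A → ℝ) → ℝ) (hdiff : Differentiable ℝ Φ)
    (hpot : ∀ y ∈ FlowSet A, ∀ a : A, fderiv ℝ Φ y (Pi.single a 1) = c a y)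
    (hconv : ConvexOn ℝ (FlowSet A) Φ)
    (y : A → ℝ) (hy : y ∈ FlowSet A) :
    (∀ a b : A, y a * c a y ≤ y a * c b y) ↔ (∀ z ∈ FlowSet A, Φ y ≤ Φ z) :=
  stmt2_general c Φ hdiff hpot hconv y hy
end

section
/- Let Γ = (A, c) be an anonymous nonatomic game admitting a potential Φ that is convex on 𝓕. Then a Borel probability measure μ on 𝓕 is a coarse correlated Wardrop equilibrium of Γ if and only if μ gives probability 1 to the set of Wardrop equilibria of Γ. Consequently, the set of coarse correlated Wardrop equilibria, the set of correlated Wardrop equilibria, and the set of probability measures supported on the Wardrop equilibria all coincide. -/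
/-!
Let `z` minimise the convex potential `Φ` over the simplex. For every flow `y`, convexity gives
`Φ y - Φ z ≤ ∇Φ(y)·(y - z) = ∑ₐ yₐ cₐ(y) - ∑_b z_b c_b(y)`. Integrating against a coarse
correlated equilibrium `μ`, the right-hand side has nonpositive integral (average the coarse
deviation constraints with weights `z_b`), so `Φ = Φ z` almost surely. Hence almost every flow
minimises `Φ`, and the first-order optimality condition at a minimiser is exactly the Wardrop
condition. Conversely, integrating the Wardrop inequalities gives the correlated constraints,
and summing those over `a` gives the coarse ones.
-/

open MeasureTheory

section FirstOrder

variable {E : Type*} [NormedAddCommGroup E] [NormedSpace ℝ E] {s : Set E} {f : E → ℝ} {x z : E}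

theorem ConvexOn.fderiv_sub_le (hf : ConvexOn ℝ s f) (hd : DifferentiableAt ℝ f x)
    (hx : x ∈ s) (hz : z ∈ s) : fderiv ℝ f x (z - x) ≤ f z - f x := by
  have hline : HasDerivAt (f ∘ AffineMap.lineMap (k := ℝ) x z) (fderiv ℝ f x (z - x)) 0 := by
    have hdx : HasFDerivAt f (fderiv ℝ f x) (AffineMap.lineMap (k := ℝ) x z 0) := by
      rw [AffineMap.lineMap_apply_zero]
      exact hd.hasFDerivAt
    exact hdx.comp_hasDerivAt 0 AffineMap.hasDerivAt_lineMap
  have hslope := (hf.comp_affineMap (AffineMap.lineMap x z)).le_slope_of_hasDerivAt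
    (by simpa using hx) (by simpa using hz) one_pos hline
  simpa [slope_def_field] using hslope

theorem IsMinOn.fderiv_sub_nonneg (hs : Convex ℝ s) (hd : DifferentiableAt ℝ f x)
    (hmin : IsMinOn f s x) (hx : x ∈ s) (hz : z ∈ s) : 0 ≤ fderiv ℝ f x (z - x) :=
  hmin.localize.hasFDerivWithinAt_nonneg hd.hasFDerivAt.hasFDerivWithinAt
    (sub_mem_posTangentConeAt_of_segment_subset (hs.segment_subset hx hz))

end FirstOrder

theorem forall_mul_le_iff_sum_mul_le {ι : Type*} [Fintype ι] {y : ι → ℝ}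
    (hy : y ∈ stdSimplex ℝ ι) (v : ι → ℝ) :
    (∀ i j, y i * v i ≤ y i * v j) ↔ ∀ j, ∑ i, y i * v i ≤ v j := by
  constructor
  · intro h j
    calc ∑ i, y i * v i ≤ ∑ i, y i * v j := Finset.sum_le_sum fun i _ => h i j
      _ = v j := by rw [← Finset.sum_mul, hy.2, one_mul]
  · intro h i j
    set m := ∑ i, y i * v i
    -- a sum of nonnegative terms that vanishes, so `v i = m` wherever `y i ≠ 0`
    have hsum : ∑ k, y k * (v k - m) = 0 := by
      simp only [mul_sub, Finset.sum_sub_distrib, ← Finset.sum_mul, hy.2, one_mul, sub_self, m]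
    have hi : y i * (v i - m) = 0 :=
      (Finset.sum_eq_zero_iff_of_nonneg fun k _ => mul_nonneg (hy.1 k) (sub_nonneg.2 (h k))).1
        hsum i (Finset.mem_univ i)
    calc y i * v i = y i * m := by linarith [mul_sub (y i) (v i) m]
      _ ≤ y i * v j := mul_le_mul_of_nonneg_left (h j) (hy.1 i)

theorem Continuous.integrable_of_compactSpace {X : Type*} [TopologicalSpace X] [CompactSpace X]
    [MeasurableSpace X] [OpensMeasurableSpace X] {μ : Measure X} [IsFiniteMeasure μ]
    {g : X → ℝ} (hg : Continuous g) : Integrable g μ :=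
  hg.integrable_of_hasCompactSupport (.of_compactSpace g)

instance (A : Type*) [Fintype A] : CompactSpace (FlowSet A) :=
  isCompact_iff_compactSpace.mp (isCompact_stdSimplex ℝ A)

section Game

variable {A : Type*} [Fintype A] (c : A → (A → ℝ) → ℝ)

def IsWardropEquilibrium (y : A → ℝ) : Prop :=
  ∀ a b, y a * c a y ≤ y a * c b y

def IsCorrelatedWardropEquilibrium (μ : Measure (FlowSet A)) : Prop :=
  ∀ a b, ∫ y, (y : A → ℝ) a * c a y ∂μ ≤ ∫ y, (y : A → ℝ) a * c b y ∂μ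

def IsCoarseCorrelatedWardropEquilibrium (μ : Measure (FlowSet A)) : Prop :=
  ∀ b, ∫ y, ∑ a, (y : A → ℝ) a * c a y ∂μ ≤ ∫ y, c b y ∂μ

def IsPotential [DecidableEq A] (Φ : (A → ℝ) → ℝ) : Prop :=
  ∀ y ∈ FlowSet A, ∀ a, fderiv ℝ Φ y (Pi.single a 1) = c a y

variable {c}

theorem isWardropEquilibrium_iff_sum_le {y : A → ℝ} (hy : y ∈ FlowSet A) :
    IsWardropEquilibrium c y ↔ ∀ b, ∑ a, y a * c a y ≤ c b y :=
  forall_mul_le_iff_sum_mul_le hy _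

section Potential

variable [DecidableEq A] {Φ : (A → ℝ) → ℝ} {y z : A → ℝ}

theorem IsPotential.fderiv_apply (hΦ : IsPotential c Φ) (hy : y ∈ FlowSet A) (z : A → ℝ) :
    fderiv ℝ Φ y z = ∑ a, z a * c a y := by
  conv_lhs => rw [pi_eq_sum_univ' z]
  simp [map_sum, hΦ y hy]

theorem IsPotential.sub_le_of_convexOn (hΦ : IsPotential c Φ) (hconv : ConvexOn ℝ (FlowSet A) Φ)
    (hd : DifferentiableAt ℝ Φ y) (hy : y ∈ FlowSet A) (hz : z ∈ FlowSet A) :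
    Φ y - Φ z ≤ ∑ a, y a * c a y - ∑ a, z a * c a y := by
  have h := hconv.fderiv_sub_le hd hy hz
  simp only [hΦ.fderiv_apply hy, Pi.sub_apply, sub_mul, Finset.sum_sub_distrib] at h
  linarith

theorem IsPotential.isWardropEquilibrium_of_isMinOn (hΦ : IsPotential c Φ)
    (hd : DifferentiableAt ℝ Φ y) (hmin : IsMinOn Φ (FlowSet A) y) (hy : y ∈ FlowSet A) :
    IsWardropEquilibrium c y := by
  refine (isWardropEquilibrium_iff_sum_le hy).2 fun b => ?_
  have h := hmin.fderiv_sub_nonneg (convex_stdSimplex ℝ A) hd hy (single_mem_stdSimplex ℝ b)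
  simp only [hΦ.fderiv_apply hy, Pi.sub_apply, sub_mul, Finset.sum_sub_distrib] at h
  simpa [Pi.single_apply] using h

end Potential

section Distributions

variable {μ : Measure (FlowSet A)} [IsProbabilityMeasure μ]

theorem continuous_flow_mul_cost (hc : ∀ a, ContinuousOn (c a) (FlowSet A)) (a b : A) :
    Continuous fun y : FlowSet A => (y : A → ℝ) a * c b y :=
  ((continuous_apply a).comp continuous_subtype_val).mul (hc b).domRestrict

theorem integrable_flow_mul_cost (hc : ∀ a, ContinuousOn (c a) (FlowSet A)) (a b : A) :
    Integrable (fun y : FlowSet A => (y : A → ℝ) a * c b y) μ :=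
  (continuous_flow_mul_cost hc a b).integrable_of_compactSpace

theorem integrable_cost (hc : ∀ a, ContinuousOn (c a) (FlowSet A)) (b : A) :
    Integrable (fun y : FlowSet A => c b y) μ :=
  (hc b).domRestrict.integrable_of_compactSpace

theorem isClosed_setOf_isWardropEquilibrium (hc : ∀ a, ContinuousOn (c a) (FlowSet A)) :
    IsClosed {y : FlowSet A | IsWardropEquilibrium c y} := by
  simp only [IsWardropEquilibrium, Set.ofPred_forall]
  exact isClosed_iInter fun a => isClosed_iInter fun b =>
    isClosed_le (continuous_flow_mul_cost hc a a) (continuous_flow_mul_cost hc a b)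

theorem isCorrelatedWardropEquilibrium_of_ae (hc : ∀ a, ContinuousOn (c a) (FlowSet A))
    (h : ∀ᵐ y : FlowSet A ∂μ, IsWardropEquilibrium c y) : IsCorrelatedWardropEquilibrium c μ :=
  fun a b => integral_mono_ae (integrable_flow_mul_cost hc a a) (integrable_flow_mul_cost hc a b)
    (h.mono fun _ hy => hy a b)

theorem IsCorrelatedWardropEquilibrium.isCoarseCorrelatedWardropEquilibrium
    (hc : ∀ a, ContinuousOn (c a) (FlowSet A)) (h : IsCorrelatedWardropEquilibrium c μ) :
    IsCoarseCorrelatedWardropEquilibrium c μ := by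
  intro b
  have hcb : ∀ y : FlowSet A, c b y = ∑ a, (y : A → ℝ) a * c b y := fun y => by
    rw [← Finset.sum_mul, y.2.2, one_mul]
  rw [integral_congr_ae (ae_of_all _ hcb),
    integral_finsetSum _ fun a _ => integrable_flow_mul_cost hc a a,
    integral_finsetSum _ fun a _ => integrable_flow_mul_cost hc a b]
  exact Finset.sum_le_sum fun a _ => h a b

theorem IsCoarseCorrelatedWardropEquilibrium.integral_sum_sub_sum_nonpos
    (hc : ∀ a, ContinuousOn (c a) (FlowSet A)) (h : IsCoarseCorrelatedWardropEquilibrium c μ)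
    {z : A → ℝ} (hz : z ∈ FlowSet A) :
    ∫ y, (∑ a, (y : A → ℝ) a * c a y - ∑ b, z b * c b y) ∂μ ≤ 0 := by
  rw [integral_sub (integrable_finsetSum _ fun a _ => integrable_flow_mul_cost hc a a)
      (integrable_finsetSum _ fun b _ => (integrable_cost hc b).const_mul _),
    integral_finsetSum _ fun b _ => (integrable_cost hc b).const_mul _, sub_nonpos]
  calc ∫ y, ∑ a, (y : A → ℝ) a * c a y ∂μ
      = ∑ b, z b * ∫ y, ∑ a, (y : A → ℝ) a * c a y ∂μ := by
        rw [← Finset.sum_mul, hz.2, one_mul]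
    _ ≤ ∑ b, z b * ∫ y, c b y ∂μ :=
        Finset.sum_le_sum fun b _ => mul_le_mul_of_nonneg_left (h b) (hz.1 b)
    _ = ∑ b, ∫ y, z b * c b y ∂μ := by simp only [integral_const_mul]

variable [DecidableEq A] {Φ : (A → ℝ) → ℝ}

theorem IsCoarseCorrelatedWardropEquilibrium.integral_potential_le
    (hc : ∀ a, ContinuousOn (c a) (FlowSet A)) (hΦ : IsPotential c Φ)
    (hconv : ConvexOn ℝ (FlowSet A) Φ) (hd : Differentiable ℝ Φ)
    (h : IsCoarseCorrelatedWardropEquilibrium c μ) {z : A → ℝ} (hz : z ∈ FlowSet A) :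
    ∫ y, Φ y ∂μ ≤ Φ z := by
  have hint : Integrable (fun y : FlowSet A => ∑ a, (y : A → ℝ) a * c a y - ∑ b, z b * c b y) μ :=
    (integrable_finsetSum _ fun a _ => integrable_flow_mul_cost hc a a).sub
      (integrable_finsetSum _ fun b _ => (integrable_cost hc b).const_mul _)
  calc ∫ y, Φ y ∂μ
      ≤ ∫ y, (Φ z + (∑ a, (y : A → ℝ) a * c a y - ∑ b, z b * c b y)) ∂μ :=
        integral_mono (hd.continuous.comp continuous_subtype_val).integrable_of_compactSpace
          ((integrable_const _).add hint) fun y => by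
            linarith [hΦ.sub_le_of_convexOn hconv (hd y) y.2 hz]
    _ = Φ z + ∫ y, (∑ a, (y : A → ℝ) a * c a y - ∑ b, z b * c b y) ∂μ := by
        rw [integral_add (integrable_const _) hint, integral_const, probReal_univ, one_smul]
    _ ≤ Φ z := add_le_of_nonpos_right (h.integral_sum_sub_sum_nonpos hc hz)

theorem IsCoarseCorrelatedWardropEquilibrium.ae_isWardropEquilibrium
    (hc : ∀ a, ContinuousOn (c a) (FlowSet A)) (hΦ : IsPotential c Φ)
    (hconv : ConvexOn ℝ (FlowSet A) Φ) (hd : Differentiable ℝ Φ)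
    (h : IsCoarseCorrelatedWardropEquilibrium c μ) :
    ∀ᵐ y : FlowSet A ∂μ, IsWardropEquilibrium c y := by
  have hne : (FlowSet A).Nonempty := Set.nonempty_coe_sort.1 (nonempty_of_isProbabilityMeasure μ)
  obtain ⟨z, hz, hmin⟩ := (isCompact_stdSimplex ℝ A).exists_isMinOn hne hd.continuous.continuousOn
  have hΦint : Integrable (fun y : FlowSet A => Φ y) μ :=
    (hd.continuous.comp continuous_subtype_val).integrable_of_compactSpace
  have hΦ_ae : (fun _ => Φ z) =ᵐ[μ] fun y : FlowSet A => Φ y := by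
    refine (integral_eq_iff_of_ae_le (integrable_const _) hΦint
      (ae_of_all _ fun y => hmin y.2)).1 (le_antisymm ?_ ?_)
    · exact integral_mono (integrable_const _) hΦint fun y => hmin y.2
    · simpa using h.integral_potential_le hc hΦ hconv hd hz
  filter_upwards [hΦ_ae] with y hy
  refine hΦ.isWardropEquilibrium_of_isMinOn (hd y) (fun w hw => ?_) y.2
  simpa [← hy] using hmin hw

theorem isCoarseCorrelatedWardropEquilibrium_iff_ae (hc : ∀ a, ContinuousOn (c a) (FlowSet A))
    (hΦ : IsPotential c Φ) (hconv : ConvexOn ℝ (FlowSet A) Φ) (hd : Differentiable ℝ Φ) :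
    IsCoarseCorrelatedWardropEquilibrium c μ ↔ ∀ᵐ y : FlowSet A ∂μ, IsWardropEquilibrium c y :=
  ⟨fun h => h.ae_isWardropEquilibrium hc hΦ hconv hd, fun h =>
    (isCorrelatedWardropEquilibrium_of_ae hc h).isCoarseCorrelatedWardropEquilibrium hc⟩

theorem isCorrelatedWardropEquilibrium_iff_ae (hc : ∀ a, ContinuousOn (c a) (FlowSet A))
    (hΦ : IsPotential c Φ) (hconv : ConvexOn ℝ (FlowSet A) Φ) (hd : Differentiable ℝ Φ) :
    IsCorrelatedWardropEquilibrium c μ ↔ ∀ᵐ y : FlowSet A ∂μ, IsWardropEquilibrium c y :=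
  ⟨fun h => (h.isCoarseCorrelatedWardropEquilibrium hc).ae_isWardropEquilibrium hc hΦ hconv hd,
    isCorrelatedWardropEquilibrium_of_ae hc⟩

end Distributions

end Game

theorem stmt3_general {A : Type*} [Fintype A] [DecidableEq A]
    (c : A → (A → ℝ) → ℝ) (hc : ∀ a, ContinuousOn (c a) (FlowSet A))
    (Φ : (A → ℝ) → ℝ) (hdiff : Differentiable ℝ Φ)
    (hpot : ∀ y ∈ FlowSet A, ∀ a : A, fderiv ℝ Φ y (Pi.single a 1) = c a y)
    (hconv : ConvexOn ℝ (FlowSet A) Φ)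
    (μ : Measure ↥(FlowSet A)) [IsProbabilityMeasure μ] :
    -- CCWE ↔ supported on Wardrop equilibria
    ((∀ b : A,
        ∫ y : ↥(FlowSet A), ∑ a, (y : A → ℝ) a * c a y ∂μ ≤
        ∫ y : ↥(FlowSet A), c b y ∂μ) ↔
      μ {y : ↥(FlowSet A) | ∀ a b : A, (y : A → ℝ) a * c a y ≤ (y : A → ℝ) a * c b y} = 1)
    ∧
    -- CWE ↔ supported on Wardrop equilibria
    ((∀ a b : A,
        ∫ y : ↥(FlowSet A), (y : A → ℝ) a * c a y ∂μ ≤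
        ∫ y : ↥(FlowSet A), (y : A → ℝ) a * c b y ∂μ) ↔
      μ {y : ↥(FlowSet A) | ∀ a b : A, (y : A → ℝ) a * c a y ≤ (y : A → ℝ) a * c b y} = 1) := by
  have hWE : (∀ᵐ y : FlowSet A ∂μ, IsWardropEquilibrium c y) ↔
      μ {y : FlowSet A | IsWardropEquilibrium c y} = 1 :=
    mem_ae_iff_prob_eq_one (isClosed_setOf_isWardropEquilibrium hc).measurableSet
  exact ⟨(isCoarseCorrelatedWardropEquilibrium_iff_ae hc hpot hconv hdiff).trans hWE,
    (isCorrelatedWardropEquilibrium_iff_ae hc hpot hconv hdiff).trans hWE⟩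

/-- In an anonymous nonatomic game `(A, c)` with a convex potential `Φ`,
a Borel probability measure `μ` on the flow simplex is a coarse correlated Wardrop
equilibrium iff it gives probability one to the set of Wardrop equilibria; likewise a
measure is a correlated Wardrop equilibrium iff it gives probability one to the set of
Wardrop equilibria.  Hence CCWE, CWE and distributions over WE coincide. -/
theorem stmt3 {A : Type*} [Fintype A] [Nonempty A] [DecidableEq A]
    (c : A → (A → ℝ) → ℝ) (hc : ∀ a, ContinuousOn (c a) (FlowSet A))
    (Φ : (A → ℝ) → ℝ) (hdiff : Differentiable ℝ Φ)
    (hpot : ∀ y ∈ FlowSet A, ∀ a : A, fderiv ℝ Φ y (Pi.single a 1) = c a y)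
    (hconv : ConvexOn ℝ (FlowSet A) Φ)
    (μ : Measure ↥(FlowSet A)) [IsProbabilityMeasure μ] :
    -- CCWE ↔ supported on Wardrop equilibria
    ((∀ b : A,
        ∫ y : ↥(FlowSet A), ∑ a, (y : A → ℝ) a * c a y ∂μ ≤
        ∫ y : ↥(FlowSet A), c b y ∂μ) ↔
      μ {y : ↥(FlowSet A) | ∀ a b : A, (y : A → ℝ) a * c a y ≤ (y : A → ℝ) a * c b y} = 1)
    ∧
    -- CWE ↔ supported on Wardrop equilibria
    ((∀ a b : A,
        ∫ y : ↥(FlowSet A), (y : A → ℝ) a * c a y ∂μ ≤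
        ∫ y : ↥(FlowSet A), (y : A → ℝ) a * c b y ∂μ) ↔
      μ {y : ↥(FlowSet A) | ∀ a b : A, (y : A → ℝ) a * c a y ≤ (y : A → ℝ) a * c b y} = 1) :=
  stmt3_general c hc Φ hdiff hpot hconv μ
end

section
/- Let Γ = (A, Θ, p, c) be an anonymous nonatomic game with incomplete information with exactly two actions, A = {a, b}, such that for every action a ∈ A and every state θ ∈ Θ the function y ↦ y_a·c_a(y,θ) is convex on 𝓕 and the function y ↦ c_a(y,θ) is concave on 𝓕. Then for every Bayes correlated Wardrop equilibrium μ of Γ there exists a simple Bayes correlated Wardrop equilibrium ȳ : Θ → 𝓕 such that for every state θ ∈ Θ, Σ_{a∈A} ȳ_a(θ)·c_a(ȳ(θ),θ) ≤ ∫ Σ_{a∈A} y_a·c_a(y,θ) dμ(y|θ); in particular its expected social cost is weakly smaller than that of μ. -/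
/-!
Take for `ȳ(θ)` the barycenter `∫ y dμ(y|θ)` of the conditional flow distribution. Jensen's
inequality for the convex maps `y ↦ y_a c_a(y,θ)` shows that passing to the barycenter lowers
every own-cost term, hence the social cost in each state. With two actions, `y_a = 1 - y_b` on
the simplex, so for `a ≠ b` the map `y ↦ y_a c_b(y,θ) = c_b(y,θ) - y_b c_b(y,θ)` is concave and
Jensen raises every cross-cost term. Sandwiching the BCWE inequalities between these two
estimates gives the SBCWE inequalities for `ȳ`.
-/

open MeasureTheory

theorem ContinuousOn.integrable_comp_subtypeVal {X F : Type*} [TopologicalSpace X]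
    [MeasurableSpace X] [OpensMeasurableSpace X] [NormedAddCommGroup F] {s : Set X}
    [CompactSpace s] {μ : Measure s} [IsFiniteMeasure μ] {f : X → F} (hf : ContinuousOn f s) :
    Integrable (fun y : s => f y) μ :=
  hf.domRestrict.integrable_of_hasCompactSupport (HasCompactSupport.of_compactSpace _)

section JensenOnSubtype

variable {E : Type*} [NormedAddCommGroup E] [NormedSpace ℝ E] [CompleteSpace E]
  [MeasurableSpace E] [OpensMeasurableSpace E] {s : Set E} [CompactSpace s]
  {μ : Measure s} [IsProbabilityMeasure μ] {g : E → ℝ}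

theorem Convex.integral_subtypeVal_mem (hs : Convex ℝ s) (hsc : IsClosed s) :
    ∫ y, (y : E) ∂μ ∈ s :=
  hs.integral_mem hsc (.of_forall Subtype.prop) continuousOn_id.integrable_comp_subtypeVal

theorem ConvexOn.map_integral_subtypeVal_le (hg : ConvexOn ℝ s g) (hgc : ContinuousOn g s)
    (hsc : IsClosed s) : g (∫ y, (y : E) ∂μ) ≤ ∫ y, g y ∂μ :=
  hg.map_integral_le hgc hsc (.of_forall Subtype.prop)
    continuousOn_id.integrable_comp_subtypeVal hgc.integrable_comp_subtypeVal

theorem ConcaveOn.le_map_integral_subtypeVal (hg : ConcaveOn ℝ s g) (hgc : ContinuousOn g s)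
    (hsc : IsClosed s) : ∫ y, g y ∂μ ≤ g (∫ y, (y : E) ∂μ) :=
  hg.le_map_integral hgc hsc (.of_forall Subtype.prop)
    continuousOn_id.integrable_comp_subtypeVal hgc.integrable_comp_subtypeVal

end JensenOnSubtype

section FlowSet

variable {A : Type*} [Fintype A]

theorem convex_flowSet : Convex ℝ (FlowSet A) := convex_stdSimplex ℝ A

theorem isClosed_flowSet : IsClosed (FlowSet A) := isClosed_stdSimplex ℝ A

instance : CompactSpace (FlowSet A) :=
  isCompact_iff_compactSpace.mp (isCompact_stdSimplex ℝ A)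

theorem apply_eq_one_sub_of_card_eq_two (hcard : Fintype.card A = 2) {a b : A} (hab : a ≠ b)
    {y : A → ℝ} (hy : y ∈ FlowSet A) : y a = 1 - y b := by
  classical
  have huniv : (Finset.univ : Finset A) = {a, b} :=
    (Finset.eq_univ_of_card _ (by rw [Finset.card_pair hab, hcard])).symm
  have hsum := hy.2
  rw [huniv, Finset.sum_pair hab] at hsum
  linarith

theorem concaveOn_flowSet_apply_mul_of_card_eq_two (hcard : Fintype.card A = 2) {a b : A}
    (hab : a ≠ b) {f : (A → ℝ) → ℝ} (hf : ConcaveOn ℝ (FlowSet A) f)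
    (hbf : ConvexOn ℝ (FlowSet A) fun y => y b * f y) :
    ConcaveOn ℝ (FlowSet A) fun y => y a * f y :=
  (hf.sub hbf).congr fun y hy => by
    simp only [Pi.sub_apply, apply_eq_one_sub_of_card_eq_two hcard hab hy]
    ring

end FlowSet

theorem stmt5_general {A Θ : Type*} [Fintype A] (hcard : Fintype.card A = 2)
    [Fintype Θ]
    (p : Θ → ℝ) (hp : ∀ θ, 0 < p θ)
    (c : A → (A → ℝ) → Θ → ℝ)
    (hc : ∀ a θ, ContinuousOn (fun y => c a y θ) (FlowSet A))
    (hconv : ∀ (a : A) (θ : Θ), ConvexOn ℝ (FlowSet A) (fun y => y a * c a y θ))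
    (hconc : ∀ (a : A) (θ : Θ), ConcaveOn ℝ (FlowSet A) (fun y => c a y θ))
    (μ : Θ → Measure ↥(FlowSet A)) (hprob : ∀ θ, IsProbabilityMeasure (μ θ))
    (hBCWE : ∀ a b : A,
      ∑ θ, p θ * ∫ y : ↥(FlowSet A), (y : A → ℝ) a * c a (y : A → ℝ) θ ∂(μ θ) ≤
      ∑ θ, p θ * ∫ y : ↥(FlowSet A), (y : A → ℝ) a * c b (y : A → ℝ) θ ∂(μ θ)) :
    ∃ ybar : Θ → (A → ℝ),
      (∀ θ, ybar θ ∈ FlowSet A) ∧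
      -- `ybar` is a simple Bayes correlated Wardrop equilibrium
      (∀ a b : A,
        ∑ θ, p θ * (ybar θ a * c a (ybar θ) θ) ≤
        ∑ θ, p θ * (ybar θ a * c b (ybar θ) θ)) ∧
      -- in each state its social cost is weakly smaller
      (∀ θ, ∑ a, ybar θ a * c a (ybar θ) θ ≤
        ∫ y : ↥(FlowSet A), ∑ a, (y : A → ℝ) a * c a (y : A → ℝ) θ ∂(μ θ)) := by
  have hcont (a b : A) (θ : Θ) : ContinuousOn (fun y : A → ℝ => y a * c b y θ) (FlowSet A) :=
    (continuous_apply a).continuousOn.mul (hc b θ)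
  have own_le (a : A) (θ : Θ) := (hconv a θ).map_integral_subtypeVal_le (μ := μ θ)
    (hcont a a θ) isClosed_flowSet
  have cross_ge (a b : A) (hab : a ≠ b) (θ : Θ) :=
    (concaveOn_flowSet_apply_mul_of_card_eq_two hcard hab (hconc b θ) (hconv b θ)
      ).le_map_integral_subtypeVal (μ := μ θ) (hcont a b θ) isClosed_flowSet
  refine ⟨fun θ => ∫ y, (y : A → ℝ) ∂μ θ, fun θ => convex_flowSet.integral_subtypeVal_mem
    isClosed_flowSet, fun a b => ?_, fun θ => ?_⟩
  · obtain rfl | hab := eq_or_ne a b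
    · exact le_rfl
    refine ((Finset.sum_le_sum fun θ _ => ?_).trans (hBCWE a b)).trans
      (Finset.sum_le_sum fun θ _ => ?_)
    · exact mul_le_mul_of_nonneg_left (own_le a θ) (hp θ).le
    · exact mul_le_mul_of_nonneg_left (cross_ge a b hab θ) (hp θ).le
  · rw [integral_finsetSum _ fun a _ => (hcont a a θ).integrable_comp_subtypeVal]
    exact Finset.sum_le_sum fun a _ => own_le a θ

/-- In an ANGII with exactly two actions, if for every action `a` and
state `θ` the map `y ↦ y a * c a y θ` is convex on the flow simplex and `y ↦ c a y θ`
is concave on it, then for every Bayes correlated Wardrop equilibrium `μ` there is a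
simple Bayes correlated Wardrop equilibrium whose (conditional) social cost in each
state is weakly smaller than that of `μ`. -/
theorem stmt5 {A Θ : Type*} [Fintype A] (hcard : Fintype.card A = 2)
    [Fintype Θ] [Nonempty Θ]
    (p : Θ → ℝ) (hp : ∀ θ, 0 < p θ) (hp1 : ∑ θ, p θ = 1)
    (c : A → (A → ℝ) → Θ → ℝ)
    (hc : ∀ a θ, ContinuousOn (fun y => c a y θ) (FlowSet A))
    (hconv : ∀ (a : A) (θ : Θ), ConvexOn ℝ (FlowSet A) (fun y => y a * c a y θ))
    (hconc : ∀ (a : A) (θ : Θ), ConcaveOn ℝ (FlowSet A) (fun y => c a y θ))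
    (μ : Θ → Measure ↥(FlowSet A)) (hprob : ∀ θ, IsProbabilityMeasure (μ θ))
    (hBCWE : ∀ a b : A,
      ∑ θ, p θ * ∫ y : ↥(FlowSet A), (y : A → ℝ) a * c a (y : A → ℝ) θ ∂(μ θ) ≤
      ∑ θ, p θ * ∫ y : ↥(FlowSet A), (y : A → ℝ) a * c b (y : A → ℝ) θ ∂(μ θ)) :
    ∃ ybar : Θ → (A → ℝ),
      (∀ θ, ybar θ ∈ FlowSet A) ∧
      -- `ybar` is a simple Bayes correlated Wardrop equilibrium
      (∀ a b : A,
        ∑ θ, p θ * (ybar θ a * c a (ybar θ) θ) ≤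
        ∑ θ, p θ * (ybar θ a * c b (ybar θ) θ)) ∧
      -- in each state its social cost is weakly smaller
      (∀ θ, ∑ a, ybar θ a * c a (ybar θ) θ ≤
        ∫ y : ↥(FlowSet A), ∑ a, (y : A → ℝ) a * c a (y : A → ℝ) θ ∂(μ θ)) :=
  stmt5_general hcard p hp c hc hconv hconc μ hprob hBCWE
end

section
/- Let Γ = (A, Θ, p, c) be an anonymous nonatomic game with incomplete information and let μ be a Bayes correlated Wardrop equilibrium of Γ. Then there exist a sequence ε_n ≥ 0 with ε_n → 0 and, for each n, an information structure (γ_n, T_n, π_n) and an ε_n-Bayes Wardrop equilibrium of Γ with that information structure whose induced outcome μ_n satisfies: for every θ ∈ Θ, μ_n(·|θ) converges weak* to μ(·|θ). -/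
open MeasureTheory Filter

/-!
Take `M` populations of mass `1/M`. Round a flow `y` drawn from `μ(·|θ)` to a profile `v` in
which about `M y_a` populations play `a`, shift it cyclically by a uniform `j`, and recommend
`v (l + j)` to population `l`. Thanks to the uniform shift, for every population the cost of
switching from a recommended `a` to `b` is the BCWE integral `∑ θ, p θ ∫ y_a c_b(y, θ)` of the
rounded outcome. Rounding moves flows by at most `|A|/M`, so these integrals converge to those of
`μ`, which satisfy the BCWE inequalities; hence obeying is an `ε_M`-BWE with `ε_M → 0`, and the
induced outcome, the law of the rounded flow, converges weak* to `μ(·|θ)`.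
-/

open Finset Topology

namespace BayesWardrop

instance {A : Type*} [Fintype A] : CompactSpace (FlowSet A) :=
  stdSimplex.instCompactSpace_coe ℝ A

lemma exists_tendsto_zero_forall_le {ι : Type*} [Fintype ι] {u : ι → ℕ → ℝ} {l : ι → ℝ}
    (hu : ∀ i, Tendsto (u i) atTop (𝓝 (l i))) (hl : ∀ i, l i ≤ 0) :
    ∃ ε : ℕ → ℝ, (∀ n, 0 ≤ ε n) ∧ Tendsto ε atTop (𝓝 0) ∧ ∀ i n, u i n ≤ ε n := by
  refine ⟨fun n => ∑ i, max (u i n) 0, fun n => sum_nonneg fun i _ => le_max_right _ _, ?_,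
    fun i n => (le_max_left _ _).trans <|
      single_le_sum (f := fun i => max (u i n) 0) (fun i _ => le_max_right _ _) (mem_univ i)⟩
  have := tendsto_finsetSum univ fun i _ => (hu i).max (tendsto_const_nhds (x := (0 : ℝ)))
  simpa only [max_eq_right (hl _), sum_const_zero] using this

theorem integral_comp_eq_sum_measureReal {X β : Type*} [MeasurableSpace X] {μ : Measure X}
    [IsFiniteMeasure μ] [Fintype β] (f : X → β) (hf : ∀ b, MeasurableSet (f ⁻¹' {b}))
    (h : β → ℝ) : ∫ x, h (f x) ∂μ = ∑ b, μ.real (f ⁻¹' {b}) * h b := by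
  classical
  have hsum : (fun x => h (f x)) = fun x => ∑ b, (f ⁻¹' {b}).indicator (fun _ => h b) x := by
    funext x
    simp [Set.indicator, Finset.sum_ite_eq]
  rw [hsum, integral_finsetSum _ fun b _ => (integrable_const _).indicator (hf b)]
  simp [integral_indicator_const _ (hf _)]

section ProfileFlow

variable {ι A : Type*} [Fintype ι] [Nonempty ι] [Fintype A] [DecidableEq A]

noncomputable def profileFlow (v : ι → A) : FlowSet A where
  val a := ∑ l, if v l = a then (Fintype.card ι : ℝ)⁻¹ else 0
  property := by
    refine ⟨fun a => sum_nonneg fun l _ => by positivity, ?_⟩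
    rw [sum_comm]
    simp

lemma profileFlow_comp_perm (v : ι → A) (σ : Equiv.Perm ι) :
    profileFlow (v ∘ σ) = profileFlow v :=
  Subtype.ext <| funext fun a => Equiv.sum_comp σ fun l => if v l = a then _ else 0

end ProfileFlow

section Cyclic

variable {G A : Type*} [AddGroup G] [Fintype G] [DecidableEq G] [Fintype A] [DecidableEq A]
  (w : (G → A) → ℝ)

/-- The law of the profile `l ↦ v (l + j)` for `v ∼ w` and `j` uniform on `G`. The shift puts
every population at a uniformly random position of `v`, so all populations share one posterior. -/
noncomputable def cyclicLaw (τ : G → A) : ℝ :=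
  (Fintype.card G : ℝ)⁻¹ * ∑ v, ∑ j, if v ∘ Equiv.addRight j = τ then w v else 0

variable {w} in
lemma cyclicLaw_nonneg (hw : ∀ v, 0 ≤ w v) (τ : G → A) : 0 ≤ cyclicLaw w τ :=
  mul_nonneg (by positivity) <| sum_nonneg fun v _ => sum_nonneg fun j _ => by
    split_ifs
    exacts [hw v, le_rfl]

lemma sum_cyclicLaw_mul (F : (G → A) → ℝ) :
    ∑ τ, cyclicLaw w τ * F τ =
      (Fintype.card G : ℝ)⁻¹ * ∑ v, ∑ j, w v * F (v ∘ Equiv.addRight j) := by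
  simp only [cyclicLaw, mul_assoc, ← mul_sum, sum_mul, ite_mul, zero_mul]
  rw [sum_comm]
  refine congrArg _ (sum_congr rfl fun v _ => ?_)
  rw [sum_comm, mul_sum]
  refine sum_congr rfl fun j _ => ?_
  rw [Finset.sum_ite_eq]
  simp

lemma sum_cyclicLaw_mul_of_invariant (F : (G → A) → ℝ)
    (hF : ∀ v j, F (v ∘ Equiv.addRight j) = F v) :
    ∑ τ, cyclicLaw w τ * F τ = ∑ v, w v * F v := by
  simp only [sum_cyclicLaw_mul, hF, sum_const, card_univ, nsmul_eq_mul, mul_sum]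
  refine sum_congr rfl fun v _ => ?_
  rw [inv_mul_cancel_left₀ (by positivity)]

lemma sum_cyclicLaw_mul_ite (k : G) (a : A) (g : FlowSet A → ℝ) :
    ∑ τ, cyclicLaw w τ * (if τ k = a then g (profileFlow τ) else 0) =
      ∑ v, w v * ((profileFlow v : A → ℝ) a * g (profileFlow v)) := by
  have hshift (v : G → A) :
      (Fintype.card G : ℝ)⁻¹ *
          ∑ j, (if (v ∘ Equiv.addRight j) k = a then g (profileFlow v) else 0) =
        (profileFlow v : A → ℝ) a * g (profileFlow v) := by
    rw [mul_sum, profileFlow, sum_mul]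
    refine Fintype.sum_equiv (Equiv.addLeft k) _ _ fun j => ?_
    by_cases h : v (k + j) = a <;> simp [h]
  rw [sum_cyclicLaw_mul]
  simp only [profileFlow_comp_perm]
  rw [mul_sum]
  refine sum_congr rfl fun v _ => ?_
  rw [← hshift, mul_sum, mul_sum, mul_sum]
  exact sum_congr rfl fun j _ => by ring

end Cyclic

section Rounding

variable {A : Type*} [Fintype A] [DecidableEq A] (a₀ : A) (M : ℕ)

/-- The subtraction is truncated, but exact on flows (`sum_erase_floor_le`). -/
noncomputable def roundCount (y : A → ℝ) (a : A) : ℕ :=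
  if a = a₀ then M - ∑ b ∈ univ.erase a₀, ⌊M * y b⌋₊ else ⌊M * y a⌋₊

variable {a₀ M}

lemma sum_erase_floor_le {y : A → ℝ} (hy : y ∈ FlowSet A) :
    ∑ b ∈ univ.erase a₀, ⌊M * y b⌋₊ ≤ M := by
  have hnonneg (b : A) : 0 ≤ (M : ℝ) * y b := mul_nonneg M.cast_nonneg (hy.1 b)
  have : ∑ b ∈ univ.erase a₀, (⌊M * y b⌋₊ : ℝ) ≤ M :=
    calc ∑ b ∈ univ.erase a₀, (⌊M * y b⌋₊ : ℝ)
        ≤ ∑ b ∈ univ.erase a₀, M * y b := sum_le_sum fun b _ => Nat.floor_le (hnonneg b)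
      _ ≤ ∑ b, M * y b :=
          sum_le_sum_of_subset_of_nonneg (erase_subset _ _) fun b _ _ => hnonneg b
      _ = M := by rw [← mul_sum, hy.2, mul_one]
  exact_mod_cast this

lemma sum_roundCount {y : A → ℝ} (hy : y ∈ FlowSet A) : ∑ a, roundCount a₀ M y a = M := by
  have hrest : ∑ a ∈ univ.erase a₀, roundCount a₀ M y a = ∑ b ∈ univ.erase a₀, ⌊M * y b⌋₊ :=
    sum_congr rfl fun a ha => if_neg (ne_of_mem_erase ha)
  rw [← add_sum_erase _ _ (mem_univ a₀), hrest, roundCount, if_pos rfl,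
    Nat.sub_add_cancel (sum_erase_floor_le hy)]

lemma abs_roundCount_sub_le {y : A → ℝ} (hy : y ∈ FlowSet A) (a : A) :
    |(roundCount a₀ M y a : ℝ) - M * y a| ≤ Fintype.card A := by
  have hfloor (b : A) : 0 ≤ M * y b - ⌊M * y b⌋₊ ∧ M * y b - ⌊M * y b⌋₊ < 1 :=
    ⟨sub_nonneg.2 (Nat.floor_le (mul_nonneg M.cast_nonneg (hy.1 b))),
      by linarith [Nat.lt_floor_add_one ((M : ℝ) * y b)]⟩
  by_cases ha : a = a₀
  · subst ha
    have hy1 := hy.2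
    rw [← add_sum_erase _ _ (mem_univ a)] at hy1
    have hdiff : (roundCount a M y a : ℝ) - M * y a =
        ∑ b ∈ univ.erase a, (M * y b - ⌊M * y b⌋₊) := by
      rw [roundCount, if_pos rfl, Nat.cast_sub (sum_erase_floor_le hy), Nat.cast_sum,
        sum_sub_distrib, ← mul_sum]
      linear_combination (-(M : ℝ)) * hy1
    rw [hdiff, abs_of_nonneg (sum_nonneg fun b _ => (hfloor b).1)]
    calc ∑ b ∈ univ.erase a, (M * y b - ⌊M * y b⌋₊)
        ≤ ∑ b ∈ univ.erase a, (1 : ℝ) := sum_le_sum fun b _ => (hfloor b).2.le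
      _ ≤ Fintype.card A := by
          rw [sum_const, nsmul_one]
          exact_mod_cast card_le_univ _
  · have hcard : (1 : ℝ) ≤ Fintype.card A := by exact_mod_cast Fintype.card_pos_iff.2 ⟨a₀⟩
    rw [roundCount, if_neg ha, abs_sub_comm, abs_of_nonneg (hfloor a).1]
    linarith [(hfloor a).2]

variable (a₀ M) in
lemma measurable_roundCount : Measurable (roundCount a₀ M : (A → ℝ) → A → ℕ) := by
  refine measurable_pi_lambda _ fun a => ?_
  have hfloor (b : A) : Measurable fun y : A → ℝ => ⌊M * y b⌋₊ :=
    Nat.measurable_floor.comp (measurable_const.mul (measurable_pi_apply b))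
  by_cases ha : a = a₀
  · simp only [roundCount, if_pos ha]
    exact measurable_const.sub (Finset.measurable_sum _ fun b _ => hfloor b)
  · simp only [roundCount, if_neg ha]
    exact hfloor a

variable (a₀ M) in
/-- A profile in which exactly `m a` of the `M` populations play `a` (junk unless `∑ m = M`). -/
noncomputable def arrangement (m : A → ℕ) : Fin M → A :=
  if h : ∑ a, m a = M then
    fun l => ((Fintype.equivFinOfCardEq (by simp [h])).symm l : Σ a, Fin (m a)).1
  else fun _ => a₀

lemma profileFlow_arrangement [NeZero M] {m : A → ℕ} (h : ∑ a, m a = M) (a : A) :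
    (profileFlow (arrangement a₀ M m) : A → ℝ) a = m a / M := by
  simp only [profileFlow, arrangement, dif_pos h, Fintype.card_fin]
  rw [← Equiv.sum_comp (Fintype.equivFinOfCardEq (α := Σ a, Fin (m a)) (by simp [h])),
    Fintype.sum_sigma, Fintype.sum_eq_single a fun b hb => by simp [hb]]
  simp [div_eq_mul_inv]

variable (a₀ M) in
noncomputable def roundProfile (y : FlowSet A) : Fin M → A :=
  arrangement a₀ M (roundCount a₀ M y)

lemma abs_profileFlow_roundProfile_sub_le [NeZero M] (y : FlowSet A) (a : A) :
    |(profileFlow (roundProfile a₀ M y) : A → ℝ) a - (y : A → ℝ) a| ≤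
      Fintype.card A / M := by
  have hM : (0 : ℝ) < M := Nat.cast_pos.2 (NeZero.pos M)
  have hdiff : (profileFlow (roundProfile a₀ M y) : A → ℝ) a - (y : A → ℝ) a =
      ((roundCount a₀ M y a : ℝ) - M * (y : A → ℝ) a) / M := by
    rw [roundProfile, profileFlow_arrangement (sum_roundCount y.2)]
    field_simp
  rw [hdiff, abs_div, abs_of_pos hM]
  exact div_le_div_of_nonneg_right (abs_roundCount_sub_le y.2 a) hM.le

lemma measurableSet_roundProfile_preimage (v : Fin M → A) :
    MeasurableSet (roundProfile a₀ M ⁻¹' {v}) :=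
  (measurable_roundCount a₀ M).comp measurable_subtype_coe
    (Set.to_countable (arrangement a₀ M ⁻¹' {v})).measurableSet

variable (a₀) in
lemma tendsto_profileFlow_roundProfile (y : FlowSet A) :
    Tendsto (fun n : ℕ => profileFlow (roundProfile a₀ (n + 1) y)) atTop (𝓝 y) := by
  refine tendsto_subtype_rng.2 <| tendsto_pi_nhds.2 fun a => ?_
  have hbound : Tendsto (fun n : ℕ => (Fintype.card A : ℝ) / (n + 1 : ℕ)) atTop (𝓝 0) :=
    (tendsto_add_atTop_iff_nat 1).2 (tendsto_const_div_atTop_nhds_zero_nat _)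
  rw [tendsto_iff_norm_sub_tendsto_zero]
  exact squeeze_zero (fun _ => norm_nonneg _)
    (fun n => abs_profileFlow_roundProfile_sub_le y a) hbound

theorem sum_measureReal_roundProfile_mul (μ : Measure (FlowSet A)) [IsFiniteMeasure μ]
    (F : (Fin M → A) → ℝ) :
    ∑ v, μ.real (roundProfile a₀ M ⁻¹' {v}) * F v = ∫ y, F (roundProfile a₀ M y) ∂μ :=
  (integral_comp_eq_sum_measureReal _ measurableSet_roundProfile_preimage F).symm

variable (a₀) in
theorem tendsto_integral_roundProfile (μ : Measure (FlowSet A)) [IsFiniteMeasure μ]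
    (f : C(FlowSet A, ℝ)) :
    Tendsto (fun n : ℕ => ∫ y, f (profileFlow (roundProfile a₀ (n + 1) y)) ∂μ) atTop
      (𝓝 (∫ y, f y ∂μ)) := by
  refine tendsto_integral_of_dominated_convergence (fun _ => ‖f‖) (fun n => ?_)
    (integrable_const _) (fun n => ae_of_all _ fun y => f.norm_coe_le_norm _)
    (ae_of_all _ fun y => (f.continuous.tendsto y).comp (tendsto_profileFlow_roundProfile a₀ y))
  have hfactor := measurable_of_countable fun m : A → ℕ =>
    f (profileFlow (arrangement a₀ (n + 1) m))
  exact (hfactor.comp ((measurable_roundCount a₀ (n + 1)).comp measurable_subtype_coe))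
    |>.aestronglyMeasurable

end Rounding

section Reindex

variable {ι T A : Type*} [Fintype ι] [DecidableEq ι] [Fintype T] [Fintype A] (e : T ≃ A)

lemma sum_comp_piCongrRight (F : (ι → A) → ℝ) : ∑ τ : ι → T, F (e ∘ τ) = ∑ v, F v :=
  Fintype.sum_equiv (Equiv.piCongrRight fun _ => e) _ _ fun _ => rfl

lemma sum_filter_comp_piCongrRight [DecidableEq T] [DecidableEq A] (k : ι) (t : T)
    (F : (ι → A) → ℝ) :
    ∑ τ ∈ univ.filter (fun τ : ι → T => τ k = t), F (e ∘ τ) =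
      ∑ v ∈ univ.filter (fun v : ι → A => v k = e t), F v :=
  Finset.sum_equiv (Equiv.piCongrRight fun _ => e) (by simp) fun _ _ => rfl

end Reindex

section Game

variable {A Θ : Type*} [Fintype A] [DecidableEq A]

section

variable [Fintype Θ] (p : Θ → ℝ) (c : A → (A → ℝ) → Θ → ℝ)

/-- The BCWE quantity `∑ θ, p θ ∫ y_a c_x(y, θ) dν(y|θ)` of the outcome `ν(·|θ)`, the law of
`profileFlow v` for `v ∼ w θ`. -/
noncomputable def deviationCost {ι : Type*} [Fintype ι] [DecidableEq ι] [Nonempty ι]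
    (w : Θ → (ι → A) → ℝ) (a x : A) : ℝ :=
  ∑ θ, p θ * ∑ v, w θ v * ((profileFlow v : A → ℝ) a * c x (profileFlow v) θ)

def IsBWEOutcome (ε : ℝ) (ν : Θ → Measure (FlowSet A)) : Prop :=
  ∃ (m : ℕ), 0 < m ∧
    ∃ (t : Fin m → ℕ), (∀ k, 0 < t k) ∧
    ∃ (γ : Fin m → ℝ) (π : Θ → (∀ k, Fin (t k)) → ℝ)
      (σ : ∀ k : Fin m, Fin (t k) → A → ℝ),
      (∀ k, 0 ≤ γ k) ∧ (∑ k, γ k = 1) ∧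
      (∀ θ τ, 0 ≤ π θ τ) ∧ (∀ θ, ∑ τ, π θ τ = 1) ∧
      (∀ k tk a, 0 ≤ σ k tk a) ∧ (∀ k tk, ∑ a, σ k tk a = γ k) ∧
      (∀ (k : Fin m) (tk : Fin (t k)) (a b : A), 0 < σ k tk a →
        (∑ θ, ∑ τ ∈ Finset.univ.filter (fun τ : ∀ k, Fin (t k) => τ k = tk),
          p θ * π θ τ * c a (fun b' => ∑ l, σ l (τ l) b') θ) ≤
        (∑ θ, ∑ τ ∈ Finset.univ.filter (fun τ : ∀ k, Fin (t k) => τ k = tk),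
          p θ * π θ τ * c b (fun b' => ∑ l, σ l (τ l) b') θ) + ε) ∧
      ∃ hagg : ∀ τ : ∀ k, Fin (t k), (fun b => ∑ l, σ l (τ l) b) ∈ FlowSet A,
        ∀ θ, ν θ =
          ∑ τ, (ENNReal.ofReal (π θ τ)) •
            Measure.dirac (⟨fun b => ∑ l, σ l (τ l) b, hagg τ⟩ : ↥(FlowSet A))

end

variable {N M : ℕ} [NeZero M] (e : Fin N ≃ A) (w : Θ → (Fin M → A) → ℝ)

/-- The outcome of the cyclic information structure in which population `l` of `Fin M` has type
`τ l`, read as the recommendation `e (τ l)`, and everyone obeys. -/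
noncomputable def cyclicOutcome (θ : Θ) : Measure (FlowSet A) :=
  ∑ τ : Fin M → Fin N,
    ENNReal.ofReal (cyclicLaw (w θ) (e ∘ τ)) • Measure.dirac (profileFlow (e ∘ τ))

variable {w} in
lemma integral_cyclicOutcome (hw : ∀ θ v, 0 ≤ w θ v) (θ : Θ) (f : C(FlowSet A, ℝ)) :
    ∫ y, f y ∂(cyclicOutcome e w θ) = ∑ v, w θ v * f (profileFlow v) := by
  rw [cyclicOutcome, integral_finsetSum_measure fun τ _ =>
    (integrable_dirac' f.continuous.stronglyMeasurable enorm_lt_top).smul_measure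
      ENNReal.ofReal_ne_top]
  simp only [integral_smul_measure, integral_dirac,
    ENNReal.toReal_ofReal (cyclicLaw_nonneg (hw θ) _), smul_eq_mul]
  rw [sum_comp_piCongrRight e fun v => cyclicLaw (w θ) v * f (profileFlow v)]
  exact sum_cyclicLaw_mul_of_invariant _ _ fun v j => by rw [profileFlow_comp_perm]

variable [Fintype Θ] (p : Θ → ℝ) (c : A → (A → ℝ) → Θ → ℝ)

lemma sum_filter_cyclicLaw_cost (k : Fin M) (t : Fin N) (x : A) :
    ∑ θ, ∑ τ ∈ univ.filter (fun τ : Fin M → Fin N => τ k = t),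
        p θ * cyclicLaw (w θ) (e ∘ τ) * c x (profileFlow (e ∘ τ)) θ =
      deviationCost p c w (e t) x := by
  refine sum_congr rfl fun θ _ => ?_
  simp only [mul_assoc, ← mul_sum]
  rw [sum_filter_comp_piCongrRight e k t
      fun v : Fin M → A => cyclicLaw (w θ) v * c x (profileFlow v) θ,
    ← sum_cyclicLaw_mul_ite (w θ) k (e t) fun y => c x y θ, sum_filter]
  simp only [mul_ite, mul_zero]

variable {w} in
theorem isBWEOutcome_cyclicOutcome [Nonempty A] (hw0 : ∀ θ v, 0 ≤ w θ v)
    (hw1 : ∀ θ, ∑ v, w θ v = 1) {ε : ℝ}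
    (hε : ∀ a b, deviationCost p c w a a ≤ deviationCost p c w a b + ε) :
    IsBWEOutcome p c ε (cyclicOutcome e w) := by
  refine ⟨M, NeZero.pos M, fun _ => N,
    fun _ => Fin.pos_iff_nonempty.2 ⟨e.symm (Classical.arbitrary A)⟩,
    fun _ => (Fintype.card (Fin M) : ℝ)⁻¹, fun θ τ => cyclicLaw (w θ) (e ∘ τ),
    fun _ t b => if e t = b then (Fintype.card (Fin M) : ℝ)⁻¹ else 0, fun _ => by positivity,
    by simp, fun θ τ => cyclicLaw_nonneg (hw0 θ) _, fun θ => ?_,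
    fun _ _ _ => by dsimp only; positivity, fun _ t => by simp, fun k t a b hσ => ?_,
    fun τ => (profileFlow (e ∘ τ)).2, fun θ => rfl⟩
  · calc ∑ τ : Fin M → Fin N, cyclicLaw (w θ) (e ∘ τ)
        = ∑ v, cyclicLaw (w θ) v * 1 := by
          simpa using sum_comp_piCongrRight e (cyclicLaw (w θ))
      _ = 1 := by rw [sum_cyclicLaw_mul_of_invariant _ _ fun _ _ => rfl]; simpa using hw1 θ
  · obtain rfl : e t = a := by
      by_contra h
      simp [h] at hσ
    calc _ = deviationCost p c w (e t) (e t) := sum_filter_cyclicLaw_cost e w p c k t (e t)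
      _ ≤ deviationCost p c w (e t) b + ε := hε _ _
      _ = _ := congrArg (· + ε) (sum_filter_cyclicLaw_cost e w p c k t b).symm

end Game

end BayesWardrop

open BayesWardrop

theorem stmt8_general {A Θ : Type*} [Fintype A] [Nonempty A] [Fintype Θ]
    (p : Θ → ℝ)
    (c : A → (A → ℝ) → Θ → ℝ)
    (hc : ∀ a θ, ContinuousOn (fun y => c a y θ) (FlowSet A))
    (μ : Θ → Measure ↥(FlowSet A)) (hprob : ∀ θ, IsProbabilityMeasure (μ θ))
    -- μ is a Bayes correlated Wardrop equilibrium
    (hBCWE : ∀ a b : A,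
      ∑ θ, p θ * ∫ y : ↥(FlowSet A), (y : A → ℝ) a * c a (y : A → ℝ) θ ∂(μ θ) ≤
      ∑ θ, p θ * ∫ y : ↥(FlowSet A), (y : A → ℝ) a * c b (y : A → ℝ) θ ∂(μ θ)) :
    ∃ (ε : ℕ → ℝ) (ν : ℕ → Θ → Measure ↥(FlowSet A)),
      (∀ n, 0 ≤ ε n) ∧ Tendsto ε atTop (nhds 0) ∧
      -- each ν n is the outcome of an (ε n)-BWE for some information structure
      (∀ n : ℕ, ∃ (m : ℕ), 0 < m ∧
        ∃ (t : Fin m → ℕ), (∀ k, 0 < t k) ∧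
        ∃ (γ : Fin m → ℝ) (π : Θ → (∀ k, Fin (t k)) → ℝ)
          (σ : ∀ k : Fin m, Fin (t k) → A → ℝ),
          (∀ k, 0 ≤ γ k) ∧ (∑ k, γ k = 1) ∧
          (∀ θ τ, 0 ≤ π θ τ) ∧ (∀ θ, ∑ τ, π θ τ = 1) ∧
          (∀ k tk a, 0 ≤ σ k tk a) ∧ (∀ k tk, ∑ a, σ k tk a = γ k) ∧
          -- the strategy profile is an (ε n)-Bayes Wardrop equilibrium
          (∀ (k : Fin m) (tk : Fin (t k)) (a b : A), 0 < σ k tk a →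
            (∑ θ, ∑ τ ∈ Finset.univ.filter (fun τ : ∀ k, Fin (t k) => τ k = tk),
              p θ * π θ τ * c a (fun b' => ∑ l, σ l (τ l) b') θ) ≤
            (∑ θ, ∑ τ ∈ Finset.univ.filter (fun τ : ∀ k, Fin (t k) => τ k = tk),
              p θ * π θ τ * c b (fun b' => ∑ l, σ l (τ l) b') θ) + ε n) ∧
          -- whose induced outcome is ν n
          ∃ hagg : ∀ τ : ∀ k, Fin (t k), (fun b => ∑ l, σ l (τ l) b) ∈ FlowSet A,
            ∀ θ, ν n θ =
              ∑ τ, (ENNReal.ofReal (π θ τ)) •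
                Measure.dirac (⟨fun b => ∑ l, σ l (τ l) b, hagg τ⟩ : ↥(FlowSet A))) ∧
      -- weak* convergence of the outcomes to μ, state by state
      (∀ (θ : Θ) (f : C(↥(FlowSet A), ℝ)),
        Tendsto (fun n => ∫ y, f y ∂(ν n θ)) atTop (nhds (∫ y, f y ∂(μ θ)))) := by
  classical
  obtain ⟨a₀⟩ := ‹Nonempty A›
  let w (n : ℕ) (θ : Θ) (v : Fin (n + 1) → A) : ℝ :=
    (μ θ).real (roundProfile a₀ (n + 1) ⁻¹' {v})
  have hcost (a x : A) : Tendsto (fun n => deviationCost p c (w n) a x) atTop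
      (𝓝 (∑ θ, p θ * ∫ y : FlowSet A, (y : A → ℝ) a * c x y θ ∂(μ θ))) := by
    simp only [deviationCost, w, sum_measureReal_roundProfile_mul]
    have hcont (θ : Θ) : Continuous fun y : FlowSet A => (y : A → ℝ) a * c x y θ :=
      ((continuous_apply a).comp continuous_subtype_val).mul (hc x θ).domRestrict
    exact tendsto_finsetSum _ fun θ _ =>
      (tendsto_integral_roundProfile a₀ (μ θ) ⟨_, hcont θ⟩).const_mul (p θ)
  obtain ⟨ε, hε0, hε, hle⟩ := exists_tendsto_zero_forall_le
    (fun ab : A × A => (hcost ab.1 ab.1).sub (hcost ab.1 ab.2))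
    (fun ab => sub_nonpos.2 (hBCWE ab.1 ab.2))
  refine ⟨ε, fun n => cyclicOutcome (Fintype.equivFin A).symm (w n), hε0, hε,
    fun n => isBWEOutcome_cyclicOutcome _ p c (fun _ _ => measureReal_nonneg) (fun θ => ?_)
      fun a b => by linarith [hle (a, b) n], fun θ f => ?_⟩
  · simpa using sum_measureReal_roundProfile_mul (a₀ := a₀) (M := n + 1) (μ θ) 1
  · simp only [integral_cyclicOutcome _ (fun _ _ => measureReal_nonneg), w,
      sum_measureReal_roundProfile_mul]
    exact tendsto_integral_roundProfile a₀ (μ θ) f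

/-- Every Bayes correlated Wardrop equilibrium `μ` can be weak*
approximated by outcomes of `ε_n`-Bayes Wardrop equilibria (with `ε_n → 0`) for
suitable information structures. -/
theorem stmt8 {A Θ : Type*} [Fintype A] [Nonempty A] [Fintype Θ] [Nonempty Θ]
    (p : Θ → ℝ) (hp : ∀ θ, 0 < p θ) (hp1 : ∑ θ, p θ = 1)
    (c : A → (A → ℝ) → Θ → ℝ)
    (hc : ∀ a θ, ContinuousOn (fun y => c a y θ) (FlowSet A))
    (μ : Θ → Measure ↥(FlowSet A)) (hprob : ∀ θ, IsProbabilityMeasure (μ θ))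
    -- μ is a Bayes correlated Wardrop equilibrium
    (hBCWE : ∀ a b : A,
      ∑ θ, p θ * ∫ y : ↥(FlowSet A), (y : A → ℝ) a * c a (y : A → ℝ) θ ∂(μ θ) ≤
      ∑ θ, p θ * ∫ y : ↥(FlowSet A), (y : A → ℝ) a * c b (y : A → ℝ) θ ∂(μ θ)) :
    ∃ (ε : ℕ → ℝ) (ν : ℕ → Θ → Measure ↥(FlowSet A)),
      (∀ n, 0 ≤ ε n) ∧ Tendsto ε atTop (nhds 0) ∧
      -- each ν n is the outcome of an (ε n)-BWE for some information structure
      (∀ n : ℕ, ∃ (m : ℕ), 0 < m ∧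
        ∃ (t : Fin m → ℕ), (∀ k, 0 < t k) ∧
        ∃ (γ : Fin m → ℝ) (π : Θ → (∀ k, Fin (t k)) → ℝ)
          (σ : ∀ k : Fin m, Fin (t k) → A → ℝ),
          (∀ k, 0 ≤ γ k) ∧ (∑ k, γ k = 1) ∧
          (∀ θ τ, 0 ≤ π θ τ) ∧ (∀ θ, ∑ τ, π θ τ = 1) ∧
          (∀ k tk a, 0 ≤ σ k tk a) ∧ (∀ k tk, ∑ a, σ k tk a = γ k) ∧
          -- the strategy profile is an (ε n)-Bayes Wardrop equilibrium
          (∀ (k : Fin m) (tk : Fin (t k)) (a b : A), 0 < σ k tk a →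
            (∑ θ, ∑ τ ∈ Finset.univ.filter (fun τ : ∀ k, Fin (t k) => τ k = tk),
              p θ * π θ τ * c a (fun b' => ∑ l, σ l (τ l) b') θ) ≤
            (∑ θ, ∑ τ ∈ Finset.univ.filter (fun τ : ∀ k, Fin (t k) => τ k = tk),
              p θ * π θ τ * c b (fun b' => ∑ l, σ l (τ l) b') θ) + ε n) ∧
          -- whose induced outcome is ν n
          ∃ hagg : ∀ τ : ∀ k, Fin (t k), (fun b => ∑ l, σ l (τ l) b) ∈ FlowSet A,
            ∀ θ, ν n θ =
              ∑ τ, (ENNReal.ofReal (π θ τ)) •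
                Measure.dirac (⟨fun b => ∑ l, σ l (τ l) b, hagg τ⟩ : ↥(FlowSet A))) ∧
      -- weak* convergence of the outcomes to μ, state by state
      (∀ (θ : Θ) (f : C(↥(FlowSet A), ℝ)),
        Tendsto (fun n => ∫ y, f y ∂(ν n θ)) atTop (nhds (∫ y, f y ∂(μ θ)))) :=
  stmt8_general p c hc μ hprob hBCWE
end
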